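/- Fix an integer d ≥ 1 and set ω = exp(2πi/d). For any vector a : ℤ/dℤ → ℂ and all i, k ∈ ℤ/dℤ, one has (1/d)·Σ_{j∈ℤ/dℤ} ω^{kj} · |⟨a|X^i Z^j|a⟩|² = Σ_{r∈ℤ/dℤ} conj(a_r)·conj(a_{r+k−i})·a_{r−i}·a_{r+k}; that is, the discrete Fourier transform in j of the squared overlaps |⟨a|X^iZ^j|a⟩|² equals G(i,k). -/

import Mathlib

/-!
Write `ψ x = ω ^ x.val` for the standard additive character of `ℤ/dℤ`. With
`F r = conj (a r) * a (r - i)` one has `⟨a|X^i Z^j|a⟩ = ψ (-i j) · Σ_r F r ψ (r j)`, so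
`|⟨a|X^i Z^j|a⟩|²` is the power spectrum of `F`. By orthogonality of the characters, its Fourier
transform in `j` is `d` times the autocorrelation `Σ_r F r · conj (F (r + k))` (discrete
Wiener–Khinchin), and that autocorrelation is `G(i,k)`.
-/

open scoped BigOperators

/-- `ω = exp(2πi/d)`. -/
noncomputable def omeg (d : ℕ) : ℂ := Complex.exp (2 * Real.pi * Complex.I / d)

/-- The shift matrix `X`, with entries `X_{r,s} = δ_{r,s+1}`. -/
def Xmat (d : ℕ) : Matrix (ZMod d) (ZMod d) ℂ :=
  fun r s => if r = s + 1 then 1 else 0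

/-- The clock matrix `Z`, with entries `Z_{r,s} = ω^r δ_{r,s}`. -/
noncomputable def Zmat (d : ℕ) : Matrix (ZMod d) (ZMod d) ℂ :=
  fun r s => if r = s then omeg d ^ r.val else 0

/-- `⟨a|M|a⟩ = Σ_{r,s} conj(a_r)·M_{r,s}·a_s`. -/
noncomputable def overlap (d : ℕ) [NeZero d] (a : ZMod d → ℂ)
    (M : Matrix (ZMod d) (ZMod d) ℂ) : ℂ :=
  ∑ r : ZMod d, ∑ s : ZMod d, (starRingEnd ℂ) (a r) * M r s * a s

/-- `G(i,k) = Σ_r conj(a_r)·conj(a_{r+k−i})·a_{r−i}·a_{r+k}`. -/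
noncomputable def Gfun (d : ℕ) [NeZero d] (a : ZMod d → ℂ) (i k : ZMod d) : ℂ :=
  ∑ r : ZMod d,
    (starRingEnd ℂ) (a r) * (starRingEnd ℂ) (a (r + k - i)) * a (r - i) * a (r + k)

open Finset Matrix ZMod ComplexConjugate

lemma AddChar.IsPrimitive.sum_mul_sq_norm_sum {R : Type*} [CommRing R] [Fintype R]
    {ψ : AddChar R ℂ} (hψ : ψ.IsPrimitive) (F : R → ℂ) (k : R) :
    ∑ j, ψ (k * j) * ((‖∑ r, F r * ψ (r * j)‖ : ℝ) : ℂ) ^ 2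
      = Fintype.card R * ∑ r, F r * conj (F (r + k)) := by
  classical
  have hsq (j : R) : ((‖∑ r, F r * ψ (r * j)‖ : ℝ) : ℂ) ^ 2
      = ∑ r, ∑ t, F r * conj (F t) * ψ ((r - t) * j) := by
    rw [← Complex.ofReal_pow, Complex.sq_norm, ← Complex.mul_conj, map_sum, sum_mul_sum]
    refine sum_congr rfl fun r _ ↦ sum_congr rfl fun t _ ↦ ?_
    rw [map_mul (starRingEnd ℂ), ← AddChar.map_neg_eq_conj, sub_mul, sub_eq_add_neg,
      AddChar.map_add_eq_mul]
    ring
  have horth (b : R) : ∑ j, ψ (j * b) = if b = 0 then (Fintype.card R : ℂ) else 0 := by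
    rw [AddChar.sum_mulShift _ hψ, Nat.cast_ite, Nat.cast_zero]
  calc ∑ j, ψ (k * j) * ((‖∑ r, F r * ψ (r * j)‖ : ℝ) : ℂ) ^ 2
      = ∑ r, ∑ t, F r * conj (F t) * ∑ j, ψ (j * (r + k - t)) := by
        simp only [hsq, mul_sum]
        rw [sum_comm]
        refine sum_congr rfl fun r _ ↦ ?_
        rw [sum_comm]
        refine sum_congr rfl fun t _ ↦ sum_congr rfl fun j _ ↦ ?_
        rw [show j * (r + k - t) = k * j + (r - t) * j by ring, AddChar.map_add_eq_mul]
        ring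
    _ = Fintype.card R * ∑ r, F r * conj (F (r + k)) := by
        simp only [horth, sub_eq_zero, mul_ite, mul_zero, sum_ite_eq, mem_univ, if_true, mul_sum]
        refine sum_congr rfl fun r _ ↦ ?_
        ring

section

variable {d : ℕ} [NeZero d]

lemma omeg_pow_val (x : ZMod d) : omeg d ^ x.val = stdAddChar x := by
  rw [stdAddChar_apply, toCircle_apply, omeg, ← Complex.exp_nat_mul]
  ring_nf

lemma Xmat_mulVec (v : ZMod d → ℂ) : Xmat d *ᵥ v = fun r ↦ v (r - 1) := by
  ext r
  simp [Xmat, mulVec, dotProduct, ← sub_eq_iff_eq_add]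

lemma Xmat_pow_mulVec (m : ℕ) (v : ZMod d → ℂ) :
    Xmat d ^ m *ᵥ v = fun r ↦ v (r - m) := by
  induction m with
  | zero => simp
  | succ m ih =>
    rw [pow_succ', ← mulVec_mulVec, ih, Xmat_mulVec]
    ext r
    rw [Nat.cast_succ, sub_sub, add_comm]

lemma Zmat_eq_diagonal : Zmat d = diagonal (stdAddChar ·) := by
  ext r s
  simp [Zmat, diagonal, omeg_pow_val]

lemma Zmat_pow_val_mulVec (j : ZMod d) (v : ZMod d → ℂ) :
    Zmat d ^ j.val *ᵥ v = fun r ↦ stdAddChar (r * j) * v r := by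
  ext r
  rw [Zmat_eq_diagonal, diagonal_pow, mulVec_diagonal, Pi.pow_apply, ← AddChar.map_nsmul_eq_pow,
    nsmul_eq_mul, natCast_zmod_val, mul_comm j r, mul_comm]

lemma overlap_eq_sum_mulVec (a : ZMod d → ℂ) (M : Matrix (ZMod d) (ZMod d) ℂ) :
    overlap d a M = ∑ r, conj (a r) * (M *ᵥ a) r := by
  simp only [overlap, mulVec, dotProduct, mul_sum, mul_assoc]

lemma overlap_shift_clock (a : ZMod d → ℂ) (i j : ZMod d) :
    overlap d a (Xmat d ^ i.val * Zmat d ^ j.val)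
      = ∑ r, conj (a r) * a (r - i) * stdAddChar ((r - i) * j) := by
  rw [overlap_eq_sum_mulVec, ← mulVec_mulVec, Zmat_pow_val_mulVec, Xmat_pow_mulVec,
    natCast_zmod_val]
  refine sum_congr rfl fun r _ ↦ ?_
  beta_reduce
  ring

lemma norm_overlap_shift_clock (a : ZMod d → ℂ) (i j : ZMod d) :
    ‖overlap d a (Xmat d ^ i.val * Zmat d ^ j.val)‖
      = ‖∑ r, conj (a r) * a (r - i) * stdAddChar (r * j)‖ := by
  have hphase : overlap d a (Xmat d ^ i.val * Zmat d ^ j.val)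
      = stdAddChar (-(i * j)) * ∑ r, conj (a r) * a (r - i) * stdAddChar (r * j) := by
    rw [overlap_shift_clock, mul_sum]
    refine sum_congr rfl fun r _ ↦ ?_
    rw [sub_mul, sub_eq_neg_add (r * j), AddChar.map_add_eq_mul]
    ring
  rw [hphase, norm_mul, AddChar.norm_apply, one_mul]

end

theorem stmt_14 (d : ℕ) [NeZero d] (a : ZMod d → ℂ) (i k : ZMod d) :
    (1 / (d : ℂ)) * ∑ j : ZMod d, omeg d ^ (k * j).val *
        ((‖overlap d a (Xmat d ^ i.val * Zmat d ^ j.val)‖ : ℝ) : ℂ) ^ 2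
      = Gfun d a i k := by
  have hd : (d : ℂ) ≠ 0 := Nat.cast_ne_zero.mpr (NeZero.ne d)
  simp only [omeg_pow_val, norm_overlap_shift_clock]
  rw [(isPrimitive_stdAddChar d).sum_mul_sq_norm_sum, ZMod.card, one_div,
    inv_mul_cancel_left₀ hd, Gfun]
  refine sum_congr rfl fun r _ ↦ ?_
  simp only [map_mul, Complex.conj_conj, add_sub_right_comm]
  ring
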